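/- arXiv:2004.01867 — 2 statements merged into one kernel-verified Lean document; each statement's English description precedes it below -/
import Mathlib

section
/- Let F be an n×n sub-stochastic matrix with all diagonal entries equal to zero. If exactly one row sum of F equals 1, then ρ(F) ≤ √α₁ < 1, where α₁ = max{Λ_s[F] : Λ_s[F] < 1}. -/
/-- The spectral radius of a real square matrix. -/
noncomputable def specRad {n : ℕ} (M : Matrix (Fin n) (Fin n) ℝ) : ℝ :=
  ⨆ μ : spectrum ℂ (M.map (algebraMap ℝ ℂ)), ‖(μ : ℂ)‖

/-!
The row sums of `F * F` are `∑ₖ F i k Λₖ`. Row `s` puts no weight on itself, since `F s s = 0`,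
so the only row sum equal to `1` never enters its own average; hence every row sum of `F * F`
is at most `α₁`. An eigenvalue `μ` of `F` gives the eigenvalue `μ²` of `F * F`, and bounding it by
the maximal row sum (the `ℓ∞` operator norm) yields `|μ|² ≤ α₁`.
-/

open Matrix

attribute [local instance] Matrix.linftyOpNormedRing Matrix.linftyOpNormedAlgebra

theorem Matrix.sum_mul_apply {l m n α : Type*} [Fintype m] [Fintype n]
    [NonUnitalNonAssocSemiring α] (A : Matrix l m α) (B : Matrix m n α) (i : l) :
    ∑ j, (A * B) i j = ∑ k, A i k * ∑ j, B k j := by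
  simp only [mul_apply, Finset.mul_sum]
  exact Finset.sum_comm

section RowSums

variable {ι : Type*} [Fintype ι]

theorem norm_le_of_mem_spectrum_of_rowSum_le [DecidableEq ι] [Nonempty ι]
    {A : Matrix ι ι ℝ} (hA : ∀ i j, 0 ≤ A i j) {c : ℝ} (hc : ∀ i, ∑ j, A i j ≤ c)
    {μ : ℂ} (hμ : μ ∈ spectrum ℂ (A.map (algebraMap ℝ ℂ))) : ‖μ‖ ≤ c := by
  obtain ⟨i, -, hi⟩ := Finset.exists_mem_eq_sup Finset.univ Finset.univ_nonempty
    fun i => ∑ j, ‖A.map (algebraMap ℝ ℂ) i j‖₊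
  calc ‖μ‖ ≤ ‖A.map (algebraMap ℝ ℂ)‖ := spectrum.norm_le_norm_of_mem hμ
    _ = ∑ j, A i j := by
      rw [linfty_opNorm_def, hi, NNReal.coe_sum]
      refine Finset.sum_congr rfl fun j _ => ?_
      simp [abs_of_nonneg (hA i j)]
    _ ≤ c := hc i

theorem sum_mul_self_apply_le {F : Matrix ι ι ℝ} (hF : ∀ i j, 0 ≤ F i j)
    (hrow : ∀ i, ∑ j, F i j ≤ 1) (hdiag : ∀ i, F i i = 0) {s : ι} {α : ℝ} (hα : 0 ≤ α)
    (hrow_ne : ∀ i ≠ s, ∑ j, F i j ≤ α) (i : ι) : ∑ j, (F * F) i j ≤ α := by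
  rw [sum_mul_apply]
  by_cases hi : i = s
  · subst hi
    have hterm : ∀ k, F i k * ∑ j, F k j ≤ F i k * α := fun k => by
      by_cases hk : k = i
      · simp [hk, hdiag]
      · exact mul_le_mul_of_nonneg_left (hrow_ne k hk) (hF i k)
    calc ∑ k, F i k * ∑ j, F k j ≤ (∑ k, F i k) * α := by
          rw [Finset.sum_mul]
          exact Finset.sum_le_sum fun k _ => hterm k
      _ ≤ 1 * α := mul_le_mul_of_nonneg_right (hrow i) hα
      _ = α := one_mul α
  · calc ∑ k, F i k * ∑ j, F k j ≤ ∑ k, F i k :=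
          Finset.sum_le_sum fun k _ => mul_le_of_le_one_right (hF i k) (hrow k)
      _ ≤ α := hrow_ne i hi

end RowSums

theorem specRad_le_sqrt_general {n : ℕ} (F : Matrix (Fin n) (Fin n) ℝ)
    (hnn : ∀ i j, 0 ≤ F i j) (hrow : ∀ i, ∑ j, F i j ≤ 1)
    (hdiag : ∀ i, F i i = 0)
    (huniq : ∃! s, (∑ j, F s j) = 1)
    (α₁ : ℝ) (hα₁ : IsGreatest {x | ∃ s, (∑ j, F s j) = x ∧ x < 1} α₁) :
    specRad F ≤ Real.sqrt α₁ ∧ Real.sqrt α₁ < 1 := by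
  obtain ⟨s, -, hs_unique⟩ := huniq
  obtain ⟨⟨t, ht, hα₁_lt⟩, hα₁_max⟩ := hα₁
  have : Nonempty (Fin n) := ⟨s⟩
  have hα₁_nonneg : 0 ≤ α₁ := ht ▸ Finset.sum_nonneg fun j _ => hnn t j
  have hrow_ne : ∀ i ≠ s, ∑ j, F i j ≤ α₁ := fun i hi =>
    hα₁_max ⟨i, rfl, (hrow i).lt_of_ne fun h => hi (hs_unique i h)⟩
  have hFF : ∀ i j, 0 ≤ (F * F) i j := fun i j => by
    rw [mul_apply]
    exact Finset.sum_nonneg fun k _ => mul_nonneg (hnn i k) (hnn k j)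
  refine ⟨Real.iSup_le (fun ⟨μ, hμ⟩ => ?_) (Real.sqrt_nonneg _),
    Real.sqrt_one ▸ Real.sqrt_lt_sqrt hα₁_nonneg hα₁_lt⟩
  have hμ_sq : μ ^ 2 ∈ spectrum ℂ ((F * F).map (algebraMap ℝ ℂ)) := by
    rw [Matrix.map_mul, ← sq]
    exact spectrum.pow_mem_pow _ 2 hμ
  have hμ_sq_le : ‖μ ^ 2‖ ≤ α₁ := norm_le_of_mem_spectrum_of_rowSum_le hFF
    (sum_mul_self_apply_le hnn hrow hdiag hα₁_nonneg hrow_ne) hμ_sq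
  exact Real.le_sqrt_of_sq_le (by rwa [norm_pow] at hμ_sq_le)

/-- Theorem 2.3: Let `F` be an `n × n` (`n ≥ 2`) sub-stochastic matrix with all
diagonal entries equal to zero.  If exactly one row sum of `F` equals `1`, then
`ρ(F) ≤ √α₁ < 1`, where `α₁` is the largest row sum that is `< 1`. -/
theorem specRad_le_sqrt {n : ℕ} (hn : 2 ≤ n) (F : Matrix (Fin n) (Fin n) ℝ)
    (hnn : ∀ i j, 0 ≤ F i j) (hrow : ∀ i, ∑ j, F i j ≤ 1)
    (hdiag : ∀ i, F i i = 0)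
    (huniq : ∃! s, (∑ j, F s j) = 1)
    (α₁ : ℝ) (hα₁ : IsGreatest {x | ∃ s, (∑ j, F s j) = x ∧ x < 1} α₁) :
    specRad F ≤ Real.sqrt α₁ ∧ Real.sqrt α₁ < 1 :=
  specRad_le_sqrt_general F hnn hrow hdiag huniq α₁ hα₁
end

section
/- Let F be an n×n nonnegative matrix (super-stochastic: some row sums may exceed 1), with R₁ = {s : Λ_s[F] < 1} and R₂ = {s : Λ_s[F] ≥ 1} both nonempty. Set α₁ = max{Λ_s[F] : Λ_s[F] < 1}, α₂ = min{F_{ij} : F_{ij} > 0}, α₃ = max{Λ_s[F] : Λ_s[F] ≥ 1}. Suppose that for every k ∈ R₂ there is a chain of strictly positive entries from some i ∈ R₁ to k, and let |C*| be the maximal chain length. If α₃^{|C*|+1} − (α₃ − α₁)α₂^{|C*|} < 1, then ‖F^{|C*|+1}‖_∞ < 1 and consequently ρ(F) < 1. -/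
/-- Maximum absolute row sum norm. -/
noncomputable def infNorm {m : Type*} [Fintype m] (M : Matrix m m ℝ) : ℝ :=
  ⨆ i, ∑ j, |M i j|

/-- A non-zero element chain of length `L ≥ 1` in `F` from `i` to `k`. -/
def MatChain {n : ℕ} (F : Matrix (Fin n) (Fin n) ℝ) (i k : Fin n) (L : ℕ) : Prop :=
  1 ≤ L ∧ ∃ p : Fin (L + 1) → Fin n, p 0 = i ∧ p (Fin.last L) = k ∧
    (∀ t : Fin L, p t.succ ≠ p t.castSucc) ∧
    (∀ t : Fin L, 0 < F (p t.succ) (p t.castSucc))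

/-! Every row sum of `F` is at most `α₃`, so every row sum of `F ^ m` is at most `α₃ ^ m`.
A row with row sum at most `α₁` falls short of this bound by `α₃ - α₁`, and a positive entry
`F k j ≥ α₂` turns a shortfall `δ` of row `j` of `F ^ m` into a shortfall `α₂ δ` of row `k` of
`F ^ (m + 1)`. Following a chain of length `L ≤ L*` from `R₁` to `k` (the trivial chain if
`k ∈ R₁`), row `k` of `F ^ (L* + 1)` is at most `α₃ ^ (L* + 1) - (α₃ - α₁) α₂ ^ L* < 1`. So
`‖F ^ (L* + 1)‖_∞ < 1`, and `ρ(F) ^ (L* + 1) ≤ ‖F ^ (L* + 1)‖_∞` gives `ρ(F) < 1`. -/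

open Finset

namespace Matrix

section RowSums

variable {R : Type*} {l m n : Type*} [Fintype m] [Fintype n]

lemma sum_mul_apply_s7 [NonUnitalNonAssocSemiring R] (A : Matrix l m R) (B : Matrix m n R) (k : l) :
    ∑ j, (A * B) k j = ∑ t, A k t * ∑ j, B t j := by
  simp only [mul_apply, mul_sum]
  exact sum_comm

variable [CommRing R] [PartialOrder R] [IsOrderedRing R]

lemma sum_mul_apply_le {A : Matrix l m R} {B : Matrix m n R} (hA : ∀ i j, 0 ≤ A i j) {b : R}
    (hB : ∀ t, ∑ j, B t j ≤ b) (k : l) : ∑ j, (A * B) k j ≤ (∑ t, A k t) * b := by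
  rw [sum_mul_apply_s7, sum_mul]
  exact sum_le_sum fun t _ => mul_le_mul_of_nonneg_left (hB t) (hA k t)

lemma sum_mul_apply_le_sub [DecidableEq m] {A : Matrix l m R} {B : Matrix m n R}
    (hA : ∀ i j, 0 ≤ A i j) {a b δ : R} {k : l} {j : m} (hAk : ∑ t, A k t ≤ a) (hb : 0 ≤ b)
    (hB : ∀ t, ∑ u, B t u ≤ b) (hBj : ∑ u, B j u ≤ b - δ) :
    ∑ u, (A * B) k u ≤ a * b - A k j * δ := by
  have hterm : ∀ t, A k t * ∑ u, B t u ≤ A k t * b - (Pi.single j (A k j * δ) : m → R) t := by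
    intro t
    rcases eq_or_ne t j with rfl | ht
    · simpa [mul_sub] using mul_le_mul_of_nonneg_left hBj (hA k t)
    · simpa [ht] using mul_le_mul_of_nonneg_left (hB t) (hA k t)
  calc ∑ u, (A * B) k u = ∑ t, A k t * ∑ u, B t u := sum_mul_apply_s7 A B k
    _ ≤ ∑ t, (A k t * b - (Pi.single j (A k j * δ) : m → R) t) := sum_le_sum fun t _ => hterm t
    _ = (∑ t, A k t) * b - A k j * δ := by simp [sum_sub_distrib, sum_mul]
    _ ≤ a * b - A k j * δ := by gcongr

variable [DecidableEq m] {F : Matrix m m R} (hF : ∀ i j, 0 ≤ F i j) {a : R}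
include hF

lemma sum_pow_apply_le (ha : 0 ≤ a) (hrow : ∀ i, ∑ j, F i j ≤ a) (k : ℕ) (i : m) :
    ∑ j, (F ^ k) i j ≤ a ^ k := by
  induction k generalizing i with
  | zero => simp [one_apply]
  | succ k ih =>
    calc ∑ j, (F ^ (k + 1)) i j ≤ (∑ t, (F ^ k) i t) * a := by
          rw [pow_succ]; exact sum_mul_apply_le (pow_apply_nonneg hF k) hrow i
      _ ≤ a ^ k * a := mul_le_mul_of_nonneg_right (ih i) ha
      _ = a ^ (k + 1) := (pow_succ a k).symm

variable {b c : R} (hrow : ∀ i, ∑ j, F i j ≤ a) {L : ℕ} {p : Fin (L + 1) → m}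
  (hp₀ : ∑ j, F (p 0) j ≤ b) (hba : b ≤ a) (hc : 0 ≤ c)
  (hp : ∀ t : Fin L, c ≤ F (p t.succ) (p t.castSucc))
include hrow hp₀ hba hc hp

lemma sum_pow_apply_le_of_path (t : Fin (L + 1)) :
    ∑ j, (F ^ ((t : ℕ) + 1)) (p t) j ≤ a ^ ((t : ℕ) + 1) - (a - b) * c ^ (t : ℕ) := by
  have ha : 0 ≤ a := (sum_nonneg fun j _ => hF (p 0) j).trans (hp₀.trans hba)
  induction t using Fin.induction with
  | zero => simpa using hp₀
  | succ t ih =>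
    simp only [Fin.val_succ, Fin.val_castSucc] at ih ⊢
    calc ∑ j, (F ^ ((t : ℕ) + 1 + 1)) (p t.succ) j
        ≤ a * a ^ ((t : ℕ) + 1) - F (p t.succ) (p t.castSucc) * ((a - b) * c ^ (t : ℕ)) := by
          rw [pow_succ' F]
          exact sum_mul_apply_le_sub hF (hrow _) (pow_nonneg ha _)
            (sum_pow_apply_le hF ha hrow _) ih
      _ ≤ a * a ^ ((t : ℕ) + 1) - c * ((a - b) * c ^ (t : ℕ)) := by
          have : 0 ≤ (a - b) * c ^ (t : ℕ) := mul_nonneg (sub_nonneg.2 hba) (pow_nonneg hc _)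
          gcongr
          exact hp t
      _ = a ^ ((t : ℕ) + 1 + 1) - (a - b) * c ^ ((t : ℕ) + 1) := by ring

lemma sum_pow_apply_le_of_path_of_le (hca : c ≤ a) {N : ℕ} (hLN : L ≤ N) :
    ∑ j, (F ^ (N + 1)) (p (Fin.last L)) j ≤ a ^ (N + 1) - (a - b) * c ^ N := by
  have ha : 0 ≤ a := hc.trans hca
  have hpath := sum_pow_apply_le_of_path hF hrow hp₀ hba hc hp (Fin.last L)
  rw [Fin.val_last] at hpath
  obtain ⟨d, rfl⟩ := Nat.exists_eq_add_of_le hLN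
  have hshort : 0 ≤ (a - b) * c ^ L := mul_nonneg (sub_nonneg.2 hba) (pow_nonneg hc L)
  calc ∑ j, (F ^ (L + d + 1)) (p (Fin.last L)) j
      = ∑ j, (F ^ (L + 1) * F ^ d) (p (Fin.last L)) j := by rw [← pow_add, add_right_comm]
    _ ≤ (∑ t, (F ^ (L + 1)) (p (Fin.last L)) t) * a ^ d :=
        sum_mul_apply_le (pow_apply_nonneg hF _) (sum_pow_apply_le hF ha hrow d) _
    _ ≤ (a ^ (L + 1) - (a - b) * c ^ L) * a ^ d :=
        mul_le_mul_of_nonneg_right hpath (pow_nonneg ha d)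
    _ = a ^ (L + d + 1) - (a - b) * c ^ L * a ^ d := by ring
    _ ≤ a ^ (L + d + 1) - (a - b) * c ^ L * c ^ d := by gcongr
    _ = a ^ (L + d + 1) - (a - b) * c ^ (L + d) := by ring

end RowSums

end Matrix

section Norms

variable {m : Type*} [Fintype m]

lemma infNorm_nonneg (M : Matrix m m ℝ) : 0 ≤ infNorm M :=
  Real.iSup_nonneg fun _ => sum_nonneg fun _ _ => abs_nonneg _

lemma infNorm_le_of_nonneg [Nonempty m] {M : Matrix m m ℝ} (hM : ∀ i j, 0 ≤ M i j) {c : ℝ}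
    (h : ∀ i, ∑ j, M i j ≤ c) : infNorm M ≤ c :=
  ciSup_le fun i => (sum_congr rfl fun j _ => abs_of_nonneg (hM i j)).trans_le (h i)

attribute [local instance] Matrix.linftyOpNormedAddCommGroup Matrix.linftyOpNormedRing
  Matrix.linftyOpNormedAlgebra

lemma norm_map_algebraMap_le_infNorm (M : Matrix m m ℝ) :
    ‖M.map (algebraMap ℝ ℂ)‖ ≤ infNorm M := by
  rw [Matrix.linfty_opNorm_def, ← Real.coe_toNNReal _ (infNorm_nonneg M), NNReal.coe_le_coe]
  refine Finset.sup_le fun i _ => ?_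
  rw [Real.le_toNNReal_iff_coe_le (infNorm_nonneg M)]
  push_cast
  simpa [infNorm] using le_ciSup (f := fun i => ∑ j, |M i j|) (Finite.bddAbove_range _) i

lemma specRad_le_infNorm_pow_rpow {n : ℕ} [Nonempty (Fin n)] (F : Matrix (Fin n) (Fin n) ℝ)
    {k : ℕ} (hk : k ≠ 0) : specRad F ≤ infNorm (F ^ k) ^ ((k : ℝ)⁻¹) := by
  refine Real.iSup_le (fun ⟨μ, hμ⟩ => ?_) (Real.rpow_nonneg (infNorm_nonneg _) _)
  have hμm : ‖μ‖ ^ k ≤ infNorm (F ^ k) := by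
    rw [← norm_pow]
    calc ‖μ ^ k‖ ≤ ‖F.map (algebraMap ℝ ℂ) ^ k‖ :=
          spectrum.norm_le_norm_of_mem (spectrum.pow_mem_pow _ k hμ)
      _ = ‖(F ^ k).map (algebraMap ℝ ℂ)‖ := by rw [Matrix.map_pow]
      _ ≤ infNorm (F ^ k) := norm_map_algebraMap_le_infNorm _
  calc ‖μ‖ = (‖μ‖ ^ k) ^ ((k : ℝ)⁻¹) := (Real.pow_rpow_inv_natCast (norm_nonneg _) hk).symm
    _ ≤ infNorm (F ^ k) ^ ((k : ℝ)⁻¹) := Real.rpow_le_rpow (by positivity) hμm (by positivity)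

end Norms

theorem superStochastic_specRad_lt_one_general {n : ℕ} (F : Matrix (Fin n) (Fin n) ℝ)
    (hnn : ∀ i j, 0 ≤ F i j)
    (α₁ α₂ α₃ : ℝ)
    (hα₁ : IsGreatest {x | ∃ s, (∑ j, F s j) = x ∧ x < 1} α₁)
    (hα₂ : IsLeast {x | ∃ i j, F i j = x ∧ 0 < x} α₂)
    (hα₃ : IsGreatest {x | ∃ s, (∑ j, F s j) = x ∧ 1 ≤ x} α₃)
    (Lstar : ℕ)
    (hchain : ∀ k, 1 ≤ (∑ j, F k j) → ∃ i, (∑ j, F i j) < 1 ∧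
      ∃ L, L ≤ Lstar ∧ MatChain F i k L)
    (hcond : α₃ ^ (Lstar + 1) - (α₃ - α₁) * α₂ ^ Lstar < 1) :
    infNorm (F ^ (Lstar + 1)) < 1 ∧ specRad F < 1 := by
  obtain ⟨s, -, hα₁_lt⟩ := hα₁.1
  have : Nonempty (Fin n) := ⟨s⟩
  obtain ⟨i₀, j₀, hF₀, hα₂_pos⟩ := hα₂.1
  obtain ⟨-, -, hα₃_ge⟩ := hα₃.1
  have hrow : ∀ k, ∑ j, F k j ≤ α₃ := fun k =>
    (le_or_gt 1 (∑ j, F k j)).elim (fun h => hα₃.2 ⟨k, rfl, h⟩) (fun h => h.le.trans hα₃_ge)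
  have hα₂α₃ : α₂ ≤ α₃ :=
    hF₀ ▸ (single_le_sum (fun t _ => hnn i₀ t) (mem_univ j₀)).trans (hrow i₀)
  have hα₁α₃ : α₁ ≤ α₃ := hα₁_lt.le.trans hα₃_ge
  have hrowB : ∀ k, ∑ j, (F ^ (Lstar + 1)) k j ≤ α₃ ^ (Lstar + 1) - (α₃ - α₁) * α₂ ^ Lstar := by
    intro k
    rcases lt_or_ge (∑ j, F k j) 1 with hk | hk
    · exact Matrix.sum_pow_apply_le_of_path_of_le (p := fun _ => k) hnn hrow
        (hα₁.2 ⟨k, rfl, hk⟩) hα₁α₃ hα₂_pos.le finZeroElim hα₂α₃ (Nat.zero_le _)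
    · obtain ⟨i, hi, L, hL, -, p, rfl, rfl, -, hpos⟩ := hchain k hk
      exact Matrix.sum_pow_apply_le_of_path_of_le hnn hrow (hα₁.2 ⟨_, rfl, hi⟩) hα₁α₃
        hα₂_pos.le (fun t => hα₂.2 ⟨_, _, rfl, hpos t⟩) hα₂α₃ hL
  have hnorm : infNorm (F ^ (Lstar + 1)) < 1 :=
    (infNorm_le_of_nonneg (Matrix.pow_apply_nonneg hnn _) hrowB).trans_lt hcond
  exact ⟨hnorm, (specRad_le_infNorm_pow_rpow F Lstar.succ_ne_zero).trans_lt
    (Real.rpow_lt_one (infNorm_nonneg _) hnorm (by positivity))⟩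

/-- Theorem 2.6: Let `F` be a nonnegative (super-stochastic) matrix with
`R₁ = {s | Λ_s[F] < 1}` and `R₂ = {s | Λ_s[F] ≥ 1}` nonempty, `α₁` the largest
row sum `< 1`, `α₂` the smallest positive entry, `α₃` the largest row sum
`≥ 1`.  If every `k ∈ R₂` is reached from some `i ∈ R₁` by a non-zero element
chain, `Lstar` being the maximal chain length, and
`α₃^(Lstar+1) − (α₃ − α₁) α₂^Lstar < 1`, then `‖F^(Lstar+1)‖_∞ < 1` and
consequently `ρ(F) < 1`. -/
theorem superStochastic_specRad_lt_one {n : ℕ} (F : Matrix (Fin n) (Fin n) ℝ)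
    (hnn : ∀ i j, 0 ≤ F i j)
    (hR₁ : ∃ s, ∑ j, F s j < 1) (hR₂ : ∃ s, 1 ≤ ∑ j, F s j)
    (α₁ α₂ α₃ : ℝ)
    (hα₁ : IsGreatest {x | ∃ s, (∑ j, F s j) = x ∧ x < 1} α₁)
    (hα₂ : IsLeast {x | ∃ i j, F i j = x ∧ 0 < x} α₂)
    (hα₃ : IsGreatest {x | ∃ s, (∑ j, F s j) = x ∧ 1 ≤ x} α₃)
    (Lstar : ℕ)
    (hchain : ∀ k, 1 ≤ (∑ j, F k j) → ∃ i, (∑ j, F i j) < 1 ∧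
      ∃ L, L ≤ Lstar ∧ MatChain F i k L)
    (hmax : ∃ k, 1 ≤ (∑ j, F k j) ∧ ∃ i, (∑ j, F i j) < 1 ∧ MatChain F i k Lstar)
    (hcond : α₃ ^ (Lstar + 1) - (α₃ - α₁) * α₂ ^ Lstar < 1) :
    infNorm (F ^ (Lstar + 1)) < 1 ∧ specRad F < 1 :=
  superStochastic_specRad_lt_one_general F hnn α₁ α₂ α₃ hα₁ hα₂ hα₃ Lstar hchain hcond
end
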